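/- For a fixed matrix X ∈ ℝ^{K×K}, vectors a ∈ ℝ^K, and c ≥ 0: max over δG with columns ‖δG_i‖₂ ≤ c of ‖X a + δG a‖₂ equals ‖X a‖₂ + c ‖a‖₁. -/

import Mathlib

/-!
Writing `δG a = ∑ i, a i • δG_i` bounds `‖δG a‖₂` by `c ‖a‖₁`, so the triangle inequality gives
`≤`. The bound is attained by the rank-one perturbation whose `i`-th column is `c sign(a i) u`,
with `u` a unit vector along `X a`: then `δG a = c ‖a‖₁ u` points the same way as `X a`.
-/

open Finset

noncomputable def e2 {K : ℕ} (v : Fin K → ℝ) : ℝ :=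
  Real.sqrt (∑ i, (v i) ^ 2)

noncomputable def l1 {K : ℕ} (v : Fin K → ℝ) : ℝ := ∑ i, |v i|

open Matrix

section EuclideanNorm

variable {K : ℕ}

lemma e2_eq_norm_toLp (v : Fin K → ℝ) : e2 v = ‖WithLp.toLp 2 v‖ := by
  simp [e2, EuclideanSpace.norm_eq]

lemma e2_nonneg (v : Fin K → ℝ) : 0 ≤ e2 v := Real.sqrt_nonneg _

lemma e2_add_le (v w : Fin K → ℝ) : e2 (v + w) ≤ e2 v + e2 w := by
  simpa only [e2_eq_norm_toLp, WithLp.toLp_add] using norm_add_le _ _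

lemma e2_smul (r : ℝ) (v : Fin K → ℝ) : e2 (r • v) = |r| * e2 v := by
  rw [e2_eq_norm_toLp, e2_eq_norm_toLp, WithLp.toLp_smul, norm_smul, Real.norm_eq_abs]

lemma e2_sum_le {ι : Type*} (s : Finset ι) (v : ι → Fin K → ℝ) :
    e2 (∑ i ∈ s, v i) ≤ ∑ i ∈ s, e2 (v i) := by
  simpa only [e2_eq_norm_toLp, WithLp.toLp_sum] using norm_sum_le _ _

lemma exists_e2_eq_one_and_eq_e2_smul [NeZero K] (b : Fin K → ℝ) :
    ∃ u : Fin K → ℝ, e2 u = 1 ∧ b = e2 b • u := by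
  by_cases hb : b = 0
  · obtain ⟨u, hu⟩ := exists_norm_eq (EuclideanSpace ℝ (Fin K)) zero_le_one
    exact ⟨u.ofLp, by rwa [e2_eq_norm_toLp], by simp [hb, e2]⟩
  · have hne : e2 b ≠ 0 := by simpa [e2_eq_norm_toLp] using hb
    refine ⟨(e2 b)⁻¹ • b, ?_, ?_⟩
    · rw [e2_smul, abs_inv, abs_of_nonneg (e2_nonneg b), inv_mul_cancel₀ hne]
    · rw [smul_smul, mul_inv_cancel₀ hne, one_smul]

lemma e2_add_smul_of_eq_e2_smul {b u : Fin K → ℝ} {r : ℝ} (hu : e2 u = 1)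
    (hb : b = e2 b • u) (hr : 0 ≤ r) : e2 (b + r • u) = e2 b + r := by
  calc e2 (b + r • u) = e2 ((e2 b + r) • u) := by rw [add_smul, ← hb]
    _ = e2 b + r := by rw [e2_smul, hu, mul_one, abs_of_nonneg (add_nonneg (e2_nonneg b) hr)]

lemma e2_mulVec_le_mul_l1 (M : Matrix (Fin K) (Fin K) ℝ) (a : Fin K → ℝ) {c : ℝ}
    (hM : ∀ i, e2 (fun j => M j i) ≤ c) : e2 (M *ᵥ a) ≤ c * l1 a := by
  have hcols : M *ᵥ a = ∑ i, a i • fun j => M j i := by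
    ext j
    simp [mulVec, dotProduct, Finset.sum_apply, mul_comm]
  calc e2 (M *ᵥ a) ≤ ∑ i, |a i| * e2 (fun j => M j i) := by
        simpa only [hcols, e2_smul] using e2_sum_le univ fun i => a i • fun j => M j i
    _ ≤ ∑ i, |a i| * c := by gcongr with i; exact hM i
    _ = c * l1 a := by rw [l1, Finset.mul_sum]; simp_rw [mul_comm]

end EuclideanNorm

section WorstCasePerturbation

variable {K : ℕ}

noncomputable def worstPerturbation (c : ℝ) (u a : Fin K → ℝ) : Matrix (Fin K) (Fin K) ℝ :=
  c • vecMulVec u fun k => (SignType.sign (a k) : ℝ)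

lemma e2_col_worstPerturbation_le {c : ℝ} (hc : 0 ≤ c) {u : Fin K → ℝ} (hu : e2 u = 1)
    (a : Fin K → ℝ) (i : Fin K) : e2 (fun j => worstPerturbation c u a j i) ≤ c := by
  have hcol : (fun j => worstPerturbation c u a j i) = (c * SignType.sign (a i)) • u := by
    ext j
    simp only [worstPerturbation, Matrix.smul_apply, vecMulVec_apply, Pi.smul_apply, smul_eq_mul]
    ring
  have hsign : |(SignType.sign (a i) : ℝ)| ≤ 1 := by cases SignType.sign (a i) <;> simp
  rw [hcol, e2_smul, hu, mul_one, abs_mul, abs_of_nonneg hc]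
  exact mul_le_of_le_one_right hc hsign

lemma worstPerturbation_mulVec (c : ℝ) (u a : Fin K → ℝ) :
    worstPerturbation c u a *ᵥ a = (c * l1 a) • u := by
  rw [worstPerturbation, smul_mulVec, vecMulVec_mulVec, op_smul_eq_smul, smul_smul]
  simp [dotProduct, l1]

end WorstCasePerturbation

/-- Vector case of the robust/Lasso equivalence: the worst-case perturbed residual norm
equals the nominal norm plus `c` times the ℓ¹ norm of `a`. -/
theorem max_perturbed_eq (K : ℕ) (X : Matrix (Fin K) (Fin K) ℝ) (a : Fin K → ℝ)
    (c : ℝ) (hc : 0 ≤ c) :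
    sSup {s : ℝ | ∃ δG : Matrix (Fin K) (Fin K) ℝ,
        (∀ i : Fin K, e2 (fun j => δG j i) ≤ c) ∧
        s = e2 (X.mulVec a + δG.mulVec a)} =
    e2 (X.mulVec a) + c * l1 a := by
  refine IsGreatest.csSup_eq ⟨?_, ?_⟩
  · rcases K.eq_zero_or_pos with rfl | hK
    · exact ⟨0, fun i => i.elim0, by simp [l1]⟩
    have : NeZero K := ⟨hK.ne'⟩
    obtain ⟨u, hu, hXa⟩ := exists_e2_eq_one_and_eq_e2_smul (X *ᵥ a)
    have hl1 : 0 ≤ l1 a := Finset.sum_nonneg fun i _ => abs_nonneg _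
    refine ⟨worstPerturbation c u a, e2_col_worstPerturbation_le hc hu a, ?_⟩
    rw [worstPerturbation_mulVec, e2_add_smul_of_eq_e2_smul hu hXa (mul_nonneg hc hl1)]
  · rintro s ⟨δG, hδG, rfl⟩
    exact (e2_add_le _ _).trans (add_le_add le_rfl (e2_mulVec_le_mul_l1 δG a hδG))
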